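/- arXiv:math/0410268 — 2 statements merged into one kernel-verified Lean document; each statement's English description precedes it below -/
import Mathlib

section
/- Suppose τ : C → T and τ̃ : C → T̃ are weak stability functions, n ≥ 1, and κ : {1,…,n} → C satisfies S({1,…,n},≤,κ,τ,τ̃) ≠ 0. Then there exist k, l ∈ {1,…,n} such that τ(κ(k)) ≤ τ(κ(i)) ≤ τ(κ(l)) for all i = 1,…,n, and τ̃(κ(k)) ≥ τ̃(κ({1,…,n})) ≥ τ̃(κ(l)). -/
/-!
Take `l` to be the last index at which `τ ∘ κ` is maximal. Then position `l - 1` can only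
satisfy condition (a) and position `l` only condition (b). Writing the total as `P + κ l + Q`,
with `P` the sum before `l` and `Q` the sum after it, these say `τ̃ (κ l + Q) < τ̃ P` and
`τ̃ (P + κ l) ≤ τ̃ Q`, and the weak seesaw inequality, applied to the two-term splittings of
`P + κ l + Q`, forces `τ̃ (κ l) ≤ τ̃ (P + κ l + Q)`. The first index `k` at which `τ ∘ κ` is
minimal is treated dually.
-/
open scoped Classical
open Finset Function

/-- A weak stability function on `C ⊆ A` with values in a total order:
whenever `α, γ ∈ C` (so that `β = α + γ`), either `τ α ≤ τ β ≤ τ γ` or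
`τ α ≥ τ β ≥ τ γ`. -/
def WeakStability {A T : Type*} [AddCommGroup A] [LinearOrder T] (C : Set A) (τ : A → T) : Prop :=
  ∀ α γ : A, α ∈ C → γ ∈ C →
    (τ α ≤ τ (α + γ) ∧ τ (α + γ) ≤ τ γ) ∨ (τ γ ≤ τ (α + γ) ∧ τ (α + γ) ≤ τ α)

/-- Sum `κ 0 + ⋯ + κ i`. -/
def lowSum {A : Type*} [AddCommGroup A] (κ : ℕ → A) (i : ℕ) : A :=
  ∑ j ∈ Finset.range (i + 1), κ j

/-- Sum `κ (i+1) + ⋯ + κ (n-1)`. -/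
def highSum {A : Type*} [AddCommGroup A] (κ : ℕ → A) (i n : ℕ) : A :=
  ∑ j ∈ Finset.Ico (i + 1) n, κ j

/-- Condition (a) at position `i` in the definition of the coefficient `S`. -/
def SCondA {A T T' : Type*} [AddCommGroup A] [LinearOrder T] [LinearOrder T']
    (τ : A → T) (τ' : A → T') (n : ℕ) (κ : ℕ → A) (i : ℕ) : Prop :=
  τ (κ i) ≤ τ (κ (i + 1)) ∧ τ' (highSum κ i n) < τ' (lowSum κ i)

/-- Condition (b) at position `i` in the definition of the coefficient `S`. -/
def SCondB {A T T' : Type*} [AddCommGroup A] [LinearOrder T] [LinearOrder T']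
    (τ : A → T) (τ' : A → T') (n : ℕ) (κ : ℕ → A) (i : ℕ) : Prop :=
  τ (κ (i + 1)) < τ (κ i) ∧ τ' (lowSum κ i) ≤ τ' (highSum κ i n)

/-- The transformation coefficient `S({1,…,n},≤,κ,τ,τ')` for the sequence
`κ 0, …, κ (n-1)` (indexed from `0`). -/
noncomputable def Scoeff {A T T' : Type*} [AddCommGroup A] [LinearOrder T] [LinearOrder T']
    (τ : A → T) (τ' : A → T') (n : ℕ) (κ : ℕ → A) : ℤ :=
  if ∀ i ∈ Finset.range (n - 1), SCondA τ τ' n κ i ∨ SCondB τ τ' n κ i then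
    (-1) ^ ((Finset.range (n - 1)).filter (SCondA τ τ' n κ)).card
  else 0

/-- The sequence `κ 0, …, κ (n-1)` is `τ`-reversing. -/
def Reversing {A T : Type*} [AddCommGroup A] [LinearOrder T] (τ : A → T) (n : ℕ) (κ : ℕ → A) :
    Prop :=
  ∀ i, i + 1 < n → τ (κ (i + 1)) < τ (κ i)

/-- The sequence `κ 0, …, κ (n-1)` is `τ`-semistable. -/
def Semistable {A T : Type*} [AddCommGroup A] [LinearOrder T] (τ : A → T) (n : ℕ) (κ : ℕ → A) :
    Prop :=
  ∀ i, i + 1 < n → τ (lowSum κ i) ≤ τ (highSum κ i n)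

/-- Extend a `Fin n`-indexed sequence to `ℕ` by zero. -/
def toSeq {A : Type*} [AddCommGroup A] {n : ℕ} (κ : Fin n → A) : ℕ → A :=
  fun j => if h : j < n then κ ⟨j, h⟩ else 0

/-- The subsequence of `κ` on a subset `s ⊆ Fin n`, enumerated in increasing order. -/
noncomputable def fiberSeq {A : Type*} [AddCommGroup A] {n : ℕ} (κ : Fin n → A)
    (s : Finset (Fin n)) : ℕ → A :=
  fun j => if h : j < s.card then κ (s.orderIsoOfFin rfl ⟨j, h⟩).1 else 0

/-- The transformation coefficient `U({1,…,n},≤,κ,τ,τ')`. -/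
noncomputable def Ucoeff {A T T' : Type*} [AddCommGroup A] [LinearOrder T] [LinearOrder T']
    (τ : A → T) (τ' : A → T') (n : ℕ) (κ : ℕ → A) : ℚ :=
  ∑ l ∈ Finset.Icc 1 n, ∑ m ∈ Finset.Icc l n,
    ∑ p ∈ Finset.univ.filter
        (fun p : (Fin n → Fin m) × (Fin m → Fin l) =>
          Surjective p.1 ∧ Monotone p.1 ∧ Surjective p.2 ∧ Monotone p.2),
      (if (∀ i : Fin n, τ (κ i.1) =
              τ (∑ j ∈ Finset.univ.filter (fun j : Fin n => p.1 j = p.1 i), κ j.1)) ∧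
          (∀ a : Fin l,
              τ' (∑ j ∈ Finset.univ.filter (fun j : Fin n => p.2 (p.1 j) = a), κ j.1) =
              τ' (∑ j ∈ Finset.range n, κ j)) then
        (∏ a : Fin l,
          ((Scoeff τ τ' (Finset.univ.filter (fun b : Fin m => p.2 b = a)).card
            (fiberSeq
              (fun b : Fin m => ∑ j ∈ Finset.univ.filter (fun j : Fin n => p.1 j = b), κ j.1)
              (Finset.univ.filter (fun b : Fin m => p.2 b = a)))) : ℚ))
        * ((-1 : ℚ) ^ (l - 1) / (l : ℚ))
        * ∏ b : Fin m,
            ((1 : ℚ) / (Nat.factorial (Finset.univ.filter (fun j : Fin n => p.1 j = b)).card : ℚ))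
      else 0)

section ThreeTerms

variable {A T : Type*} [AddCommGroup A] [LinearOrder T] {C : Set A} {τ : A → T}

theorem WeakStability.min_le_apply_add (hτ : WeakStability C τ) {α γ : A} (hα : α ∈ C)
    (hγ : γ ∈ C) : min (τ α) (τ γ) ≤ τ (α + γ) := by
  rcases hτ α γ hα hγ with h | h <;> simp [h.1]

theorem WeakStability.dual (hτ : WeakStability C τ) : WeakStability C (OrderDual.toDual ∘ τ) :=
  fun α γ hα hγ => (hτ α γ hα hγ).symm.imp And.symm And.symm

theorem WeakStability.le_apply_add_add (hτ : WeakStability C τ)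
    (hC : ∀ a b : A, a ∈ C → b ∈ C → a + b ∈ C) {α x γ : A} (hx : x ∈ C)
    (hα : α = 0 ∨ α ∈ C ∧ τ (x + γ) < τ α)
    (hγ : γ = 0 ∨ γ ∈ C ∧ τ (α + x) ≤ τ γ) :
    τ x ≤ τ (α + x + γ) := by
  rcases hα with rfl | ⟨hα, hαx⟩ <;> rcases hγ with rfl | ⟨hγ, hγx⟩
  · simp
  · rw [zero_add] at hγx ⊢
    exact (le_min le_rfl hγx).trans (hτ.min_le_apply_add hx hγ)
  · rw [add_zero] at hαx ⊢
    exact (le_min hαx.le le_rfl).trans (hτ.min_le_apply_add hα hx)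
  · by_contra! hlt
    have hxγ_le : τ (x + γ) ≤ τ (α + x + γ) := by
      simpa [min_eq_right hαx.le, add_assoc] using hτ.min_le_apply_add hα (hC x γ hx hγ)
    have hαx_le : τ (α + x) ≤ τ (α + x + γ) := by
      simpa [min_eq_left hγx] using hτ.min_le_apply_add (hC α x hα hx) hγ
    have hγ_le : τ γ ≤ τ (x + γ) :=
      (min_le_iff.mp (hτ.min_le_apply_add hx hγ)).resolve_left fun h => by order
    have hα_le : τ α ≤ τ (α + x) :=
      (min_le_iff.mp (hτ.min_le_apply_add hα hx)).resolve_right fun h => by order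
    order

theorem WeakStability.apply_add_add_le (hτ : WeakStability C τ)
    (hC : ∀ a b : A, a ∈ C → b ∈ C → a + b ∈ C) {α x γ : A} (hx : x ∈ C)
    (hα : α = 0 ∨ α ∈ C ∧ τ α ≤ τ (x + γ))
    (hγ : γ = 0 ∨ γ ∈ C ∧ τ γ < τ (α + x)) :
    τ (α + x + γ) ≤ τ x := by
  have key := hτ.dual.le_apply_add_add hC hx (α := γ) (γ := α)
    (hγ.imp_right fun h => ⟨h.1, by simpa [add_comm] using h.2⟩)
    (hα.imp_right fun h => ⟨h.1, by simpa [add_comm] using h.2⟩)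
  rwa [add_comm γ x, add_comm, ← add_assoc] at key

end ThreeTerms

section Sequences

variable {A : Type*} [AddCommGroup A] {C : Set A} {n : ℕ} {κ : ℕ → A}

theorem sum_Ico_mem (hC : ∀ a b : A, a ∈ C → b ∈ C → a + b ∈ C)
    (hκ : ∀ i, i < n → κ i ∈ C) {a b : ℕ} (hab : a < b) (hbn : b ≤ n) :
    ∑ j ∈ Ico a b, κ j ∈ C :=
  sum_induction_nonempty _ _ hC (nonempty_Ico.mpr hab)
    fun j hj => hκ j (by rw [mem_Ico] at hj; omega)

theorem highSum_eq_add {i : ℕ} (h : i + 2 ≤ n) :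
    highSum κ i n = κ (i + 1) + highSum κ (i + 1) n :=
  sum_eq_sum_Ico_succ_bot (by omega) κ

theorem highSum_eq_zero {i : ℕ} (h : n ≤ i + 1) : highSum κ i n = 0 := by
  simp [highSum, Ico_eq_empty_of_le h]

theorem sum_range_eq_add_add_highSum {m : ℕ} (hm : m < n) :
    ∑ j ∈ range n, κ j = ∑ j ∈ range m, κ j + κ m + highSum κ m n := by
  rw [← sum_range_succ, highSum, range_eq_Ico, range_eq_Ico,
    sum_Ico_consecutive κ (Nat.zero_le _) hm]

theorem sum_range_eq_zero_or_mem (hC : ∀ a b : A, a ∈ C → b ∈ C → a + b ∈ C)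
    (hκ : ∀ i, i < n → κ i ∈ C) (p : A → A → Prop) {m : ℕ} (hm : m < n)
    (hleft : ∀ i, i + 1 = m → p (lowSum κ i) (highSum κ i n)) :
    ∑ j ∈ range m, κ j = 0 ∨
      ∑ j ∈ range m, κ j ∈ C ∧ p (∑ j ∈ range m, κ j) (κ m + highSum κ m n) := by
  rcases m with _ | i
  · exact Or.inl (sum_range_zero κ)
  · refine Or.inr ⟨range_eq_Ico (i + 1) ▸ sum_Ico_mem hC hκ (Nat.succ_pos i) hm.le, ?_⟩
    rw [← highSum_eq_add hm]
    exact hleft i rfl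

theorem highSum_eq_zero_or_mem (hC : ∀ a b : A, a ∈ C → b ∈ C → a + b ∈ C)
    (hκ : ∀ i, i < n → κ i ∈ C) (p : A → A → Prop) {m : ℕ}
    (hright : m + 1 < n → p (lowSum κ m) (highSum κ m n)) :
    highSum κ m n = 0 ∨
      highSum κ m n ∈ C ∧ p (∑ j ∈ range m, κ j + κ m) (highSum κ m n) := by
  by_cases h : m + 1 < n
  · exact Or.inr ⟨sum_Ico_mem hC hκ h le_rfl, (sum_range_succ κ m).symm ▸ hright h⟩
  · exact Or.inl (highSum_eq_zero (by omega))

variable {T : Type*} [LinearOrder T] {τ : A → T}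

theorem WeakStability.le_apply_sum_range (hτ : WeakStability C τ)
    (hC : ∀ a b : A, a ∈ C → b ∈ C → a + b ∈ C) (hκ : ∀ i, i < n → κ i ∈ C)
    {m : ℕ} (hm : m < n)
    (hleft : ∀ i, i + 1 = m → τ (highSum κ i n) < τ (lowSum κ i))
    (hright : m + 1 < n → τ (lowSum κ m) ≤ τ (highSum κ m n)) :
    τ (κ m) ≤ τ (∑ j ∈ range n, κ j) := by
  rw [sum_range_eq_add_add_highSum hm]
  exact hτ.le_apply_add_add hC (hκ m hm)
    (sum_range_eq_zero_or_mem hC hκ (fun P R => τ R < τ P) hm hleft)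
    (highSum_eq_zero_or_mem hC hκ (fun P Q => τ P ≤ τ Q) hright)

theorem WeakStability.apply_sum_range_le (hτ : WeakStability C τ)
    (hC : ∀ a b : A, a ∈ C → b ∈ C → a + b ∈ C) (hκ : ∀ i, i < n → κ i ∈ C)
    {m : ℕ} (hm : m < n)
    (hleft : ∀ i, i + 1 = m → τ (lowSum κ i) ≤ τ (highSum κ i n))
    (hright : m + 1 < n → τ (highSum κ m n) < τ (lowSum κ m)) :
    τ (∑ j ∈ range n, κ j) ≤ τ (κ m) := by
  rw [sum_range_eq_add_add_highSum hm]
  exact hτ.apply_add_add_le hC (hκ m hm)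
    (sum_range_eq_zero_or_mem hC hκ (fun P R => τ P ≤ τ R) hm hleft)
    (highSum_eq_zero_or_mem hC hκ (fun P Q => τ Q < τ P) hright)

end Sequences

section Extremal

variable {T : Type*} [LinearOrder T]

theorem exists_last_argmax_range (f : ℕ → T) {n : ℕ} (hn : 0 < n) :
    ∃ l < n, (∀ j < n, f j ≤ f l) ∧ ∀ j < n, l < j → f j < f l := by
  obtain ⟨l, hl, hmax⟩ := (range n).exists_max_image (fun j => toLex (f j, j)) ⟨0, by simpa⟩
  have hle : ∀ j < n, f j < f l ∨ f j = f l ∧ j ≤ l := fun j hj =>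
    Prod.Lex.toLex_le_toLex.mp (hmax j (mem_range.mpr hj))
  refine ⟨l, mem_range.mp hl, fun j hj => ?_, fun j hj hlj => ?_⟩ <;>
    rcases hle j hj with h | h
  exacts [h.le, h.1.le, h, absurd h.2 (by omega)]

theorem exists_first_argmin_range (f : ℕ → T) {n : ℕ} (hn : 0 < n) :
    ∃ k < n, (∀ j < n, f k ≤ f j) ∧ ∀ j < k, f k < f j := by
  obtain ⟨k, hk, hmin⟩ := (range n).exists_min_image (fun j => toLex (f j, j)) ⟨0, by simpa⟩
  have hle : ∀ j < n, f k < f j ∨ f k = f j ∧ k ≤ j := fun j hj =>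
    Prod.Lex.toLex_le_toLex.mp (hmin j (mem_range.mpr hj))
  have hkn := mem_range.mp hk
  refine ⟨k, hkn, fun j hj => ?_, fun j hjk => ?_⟩ <;>
    rcases hle j (by omega) with h | h
  exacts [h.le, h.1.le, h, absurd h.2 (by omega)]

end Extremal

theorem SCondA_or_SCondB_of_Scoeff_ne_zero {A T T' : Type*} [AddCommGroup A] [LinearOrder T]
    [LinearOrder T'] {τ : A → T} {τ' : A → T'} {n : ℕ} {κ : ℕ → A}
    (hS : Scoeff τ τ' n κ ≠ 0) {i : ℕ} (hi : i + 1 < n) :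
    SCondA τ τ' n κ i ∨ SCondB τ τ' n κ i := by
  by_contra h
  exact hS (if_neg fun hall => h (hall i (mem_range.mpr (by omega))))

theorem stmt2_general {A T T' : Type*} [AddCommGroup A] [LinearOrder T] [LinearOrder T']
    (C : Set A) (hC : ∀ a b : A, a ∈ C → b ∈ C → a + b ∈ C)
    (τ : A → T) (τt : A → T') (hτt : WeakStability C τt)
    (n : ℕ) (hn : 1 ≤ n) (κ : ℕ → A) (hκ : ∀ i, i < n → κ i ∈ C)
    (hS : Scoeff τ τt n κ ≠ 0) :
    ∃ k l : ℕ, k < n ∧ l < n ∧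
      (∀ i, i < n → τ (κ k) ≤ τ (κ i) ∧ τ (κ i) ≤ τ (κ l)) ∧
      τt (∑ j ∈ Finset.range n, κ j) ≤ τt (κ k) ∧
      τt (κ l) ≤ τt (∑ j ∈ Finset.range n, κ j) := by
  have hcond := fun i (hi : i + 1 < n) => SCondA_or_SCondB_of_Scoeff_ne_zero hS hi
  obtain ⟨k, hk, hkmin, hkfirst⟩ := exists_first_argmin_range (τ ∘ κ) hn
  obtain ⟨l, hl, hlmax, hllast⟩ := exists_last_argmax_range (τ ∘ κ) hn
  refine ⟨k, l, hk, hl, fun i hi => ⟨hkmin i hi, hlmax i hi⟩, ?_, ?_⟩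
  · refine hτt.apply_sum_range_le hC hκ hk (fun i hik => ?_) (fun h => ?_)
    · exact ((hcond i (by omega)).resolve_left
        fun hA => absurd hA.1 (not_le.mpr (hik ▸ hkfirst i (by omega)))).2
    · exact ((hcond k h).resolve_right fun hB => absurd hB.1 (not_lt.mpr (hkmin _ h))).2
  · refine hτt.le_apply_sum_range hC hκ hl (fun i hil => ?_) (fun h => ?_)
    · exact ((hcond i (by omega)).resolve_right
        fun hB => absurd hB.1 (not_lt.mpr (hil ▸ hlmax i (by omega)))).2
    · exact ((hcond l h).resolve_left
        fun hA => absurd hA.1 (not_le.mpr (hllast _ h (by omega)))).2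

theorem stmt2 {A T T' : Type*} [AddCommGroup A] [LinearOrder T] [LinearOrder T']
    (C : Set A) (hC : ∀ a b : A, a ∈ C → b ∈ C → a + b ∈ C) (h0 : (0 : A) ∉ C)
    (τ : A → T) (τt : A → T') (hτ : WeakStability C τ) (hτt : WeakStability C τt)
    (n : ℕ) (hn : 1 ≤ n) (κ : ℕ → A) (hκ : ∀ i, i < n → κ i ∈ C)
    (hS : Scoeff τ τt n κ ≠ 0) :
    ∃ k l : ℕ, k < n ∧ l < n ∧
      (∀ i, i < n → τ (κ k) ≤ τ (κ i) ∧ τ (κ i) ≤ τ (κ l)) ∧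
      τt (∑ j ∈ Finset.range n, κ j) ≤ τt (κ k) ∧
      τt (κ l) ≤ τt (∑ j ∈ Finset.range n, κ j) :=
  stmt2_general C hC τ τt hτt n hn κ hκ hS
end

section
/- Suppose τ̃ dominates τ (i.e. τ(α) ≤ τ(β) implies τ̃(α) ≤ τ̃(β) for all α, β ∈ C). Let κ : {1,…,n} → C and α = κ({1,…,n}). Then S({1,…,n},≤,κ,τ,τ̃) = 1 if τ(κ(1)) > τ(κ(2)) > ⋯ > τ(κ(n)) and τ̃(κ(i)) = τ̃(α) for all i = 1,…,n, and S({1,…,n},≤,κ,τ,τ̃) = 0 otherwise. -/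
open scoped Classical
open Finset Function

/-!
Write `L i = κ 0 + ⋯ + κ i` and `H i = κ (i+1) + ⋯ + κ (n-1)`, so that `L i + H i = α` and, by
the seesaw, condition (b) at `i` forces `τ̃ (L i) ≤ τ̃ α ≤ τ̃ (H i)`. Suppose every position
satisfies (a) or (b). Then `τ̃ (L i) > τ̃ α` can only happen at a position satisfying (a), where
dominance gives `τ̃ (κ i) ≤ τ̃ (κ (i+1))`; so once both `L i` and `κ i` lie above `τ̃ α` they stay
above up to `L (n-1) = α`, which is absurd. Hence `τ̃ (L i) ≤ τ̃ α` for all `i`, and symmetrically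
`τ̃ α ≤ τ̃ (H i)`, which excludes (a) everywhere. With (b) everywhere `τ` strictly decreases along
`κ`, so `τ̃` weakly decreases by dominance, and `τ̃ (κ 0) ≤ τ̃ α ≤ τ̃ (κ (n-1))` makes it constant.
Conversely, if `τ̃` is constant along a `τ`-decreasing `κ`, it takes the same value on every `L i`
and `H i`, so (b) holds everywhere.
-/

theorem Set.sum_mem_of_add_mem {A ι : Type*} [AddCommMonoid A] {C : Set A}
    (hC : ∀ a b : A, a ∈ C → b ∈ C → a + b ∈ C) {s : Finset ι} (hs : s.Nonempty) {x : ι → A}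
    (hx : ∀ j ∈ s, x j ∈ C) : ∑ j ∈ s, x j ∈ C :=
  sum_induction_nonempty x (· ∈ C) hC hs hx

theorem sum_range_reflect_eq_sum_Ico {A : Type*} [AddCommMonoid A] (x : ℕ → A) {k N : ℕ}
    (hk : k ≤ N) : ∑ j ∈ range (k + 1), x (N - j) = ∑ j ∈ Ico (N - k) (N + 1), x j := by
  rw [range_eq_Ico, sum_Ico_reflect x 0 (by omega), Nat.sub_zero,
    show N + 1 - (k + 1) = N - k by omega]

namespace WeakStability

variable {A T : Type*} [AddCommGroup A] [LinearOrder T] {C : Set A} {f : A → T} {a b : A}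

theorem dual_s9 (hf : WeakStability C f) : WeakStability C (OrderDual.toDual ∘ f) :=
  fun a b ha hb => (hf a b ha hb).symm.imp And.symm And.symm

theorem add_mem_Icc (hf : WeakStability C f) (ha : a ∈ C) (hb : b ∈ C) (hab : f a ≤ f b) :
    f (a + b) ∈ Set.Icc (f a) (f b) := by
  rcases hf a b ha hb with h | ⟨h₁, h₂⟩
  · exact h
  · exact ⟨hab.trans h₁, h₂.trans hab⟩

theorem min_le_add (hf : WeakStability C f) (ha : a ∈ C) (hb : b ∈ C) :
    min (f a) (f b) ≤ f (a + b) := by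
  rcases hf a b ha hb with ⟨h, -⟩ | ⟨h, -⟩
  · exact min_le_of_left_le h
  · exact min_le_of_right_le h

theorem add_le_max (hf : WeakStability C f) (ha : a ∈ C) (hb : b ∈ C) :
    f (a + b) ≤ max (f a) (f b) := by
  rcases hf a b ha hb with ⟨-, h⟩ | ⟨-, h⟩
  · exact le_max_of_le_right h
  · exact le_max_of_le_left h

theorem sum_eq_of_forall_eq (hf : WeakStability C f) (hC : ∀ a b : A, a ∈ C → b ∈ C → a + b ∈ C)
    {ι : Type*} {s : Finset ι} (hs : s.Nonempty) {x : ι → A} {c : T}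
    (hx : ∀ j ∈ s, x j ∈ C ∧ f (x j) = c) : f (∑ j ∈ s, x j) = c := by
  refine (sum_induction_nonempty x (fun a => a ∈ C ∧ f a = c) ?_ hs hx).2
  rintro a b ⟨ha, rfl⟩ ⟨hb, hfb⟩
  have ⟨h₁, h₂⟩ := hf.add_mem_Icc ha hb hfb.ge
  exact ⟨hC a b ha hb, le_antisymm (h₂.trans hfb.le) h₁⟩

theorem sum_range_le_sum_range (hf : WeakStability C f)
    (hC : ∀ a b : A, a ∈ C → b ∈ C → a + b ∈ C) {x : ℕ → A} {N : ℕ} (hx : ∀ j ≤ N, x j ∈ C)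
    (hstep : ∀ k < N, f (∑ j ∈ range (N + 1), x j) < f (∑ j ∈ range (k + 1), x j) →
      f (x k) ≤ f (x (k + 1))) :
    ∀ k ≤ N, f (∑ j ∈ range (k + 1), x j) ≤ f (∑ j ∈ range (N + 1), x j) := by
  set total := f (∑ j ∈ range (N + 1), x j)
  have hmem : ∀ k ≤ N, ∑ j ∈ range (k + 1), x j ∈ C := fun k hk =>
    Set.sum_mem_of_add_mem hC nonempty_range_add_one
      fun j hj => hx j (by rw [mem_range] at hj; omega)
  -- once both the partial sum and the current term exceed the total, both keep doing so
  have hpropagate : ∀ m k, k + m = N →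
      total < f (∑ j ∈ range (k + 1), x j) → total < f (x k) → False := by
    intro m
    induction m with
    | zero => intro k hk hlt _; subst hk; exact hlt.false
    | succ m ih =>
      intro k hk hsum hterm
      have hnext : total < f (x (k + 1)) := hterm.trans_le (hstep k (by omega) hsum)
      refine ih (k + 1) (by omega) ?_ hnext
      rw [sum_range_succ]
      exact (lt_min hsum hnext).trans_le (hf.min_le_add (hmem k (by omega)) (hx _ (by omega)))
  intro k hk
  by_contra! hlt
  induction k with
  | zero => exact hpropagate N 0 (by omega) hlt (by simpa using hlt)
  | succ k ih =>
    by_cases hterm : total < f (x (k + 1))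
    · exact hpropagate (N - (k + 1)) (k + 1) (by omega) hlt hterm
    · refine ih (by omega) ((lt_max_iff.mp (hlt.trans_le ?_)).resolve_right hterm)
      rw [sum_range_succ]
      exact hf.add_le_max (hmem k (by omega)) (hx _ hk)

end WeakStability

section

variable {A T T' : Type*} [AddCommGroup A] [LinearOrder T] [LinearOrder T'] {C : Set A}
  {τ : A → T} {τt : A → T'} {n : ℕ} {κ : ℕ → A} {i : ℕ}

theorem lowSum_add_highSum (h : i < n) :
    lowSum κ i + highSum κ i n = ∑ j ∈ range n, κ j :=
  sum_range_add_sum_Ico κ h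

theorem lowSum_mem (hC : ∀ a b : A, a ∈ C → b ∈ C → a + b ∈ C) (hκ : ∀ i, i < n → κ i ∈ C)
    (h : i < n) : lowSum κ i ∈ C :=
  Set.sum_mem_of_add_mem hC nonempty_range_add_one fun j hj =>
    hκ j (by rw [mem_range] at hj; omega)

theorem highSum_mem (hC : ∀ a b : A, a ∈ C → b ∈ C → a + b ∈ C) (hκ : ∀ i, i < n → κ i ∈ C)
    (h : i + 1 < n) : highSum κ i n ∈ C :=
  Set.sum_mem_of_add_mem hC (nonempty_Ico.mpr h) fun j hj => hκ j (mem_Ico.mp hj).2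

theorem SCondB.lowSum_le_and_le_highSum (hC : ∀ a b : A, a ∈ C → b ∈ C → a + b ∈ C)
    (hτt : WeakStability C τt) (hκ : ∀ i, i < n → κ i ∈ C) (h : i + 1 < n)
    (hB : SCondB τ τt n κ i) :
    τt (lowSum κ i) ≤ τt (∑ j ∈ range n, κ j) ∧ τt (∑ j ∈ range n, κ j) ≤ τt (highSum κ i n) := by
  rw [← lowSum_add_highSum (by omega : i < n)]
  exact hτt.add_mem_Icc (lowSum_mem hC hκ (by omega)) (highSum_mem hC hκ h) hB.2

section Dominance

variable (hC : ∀ a b : A, a ∈ C → b ∈ C → a + b ∈ C) (hτt : WeakStability C τt)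
  (hdom : ∀ α β : A, α ∈ C → β ∈ C → τ α ≤ τ β → τt α ≤ τt β) (hκ : ∀ i, i < n → κ i ∈ C)
include hC hτt hdom hκ

theorem le_succ_of_condA_or_condB (h : i + 1 < n) (hAB : SCondA τ τt n κ i ∨ SCondB τ τt n κ i)
    (hout : τt (∑ j ∈ range n, κ j) < τt (lowSum κ i) ∨
      τt (highSum κ i n) < τt (∑ j ∈ range n, κ j)) :
    τt (κ i) ≤ τt (κ (i + 1)) := by
  rcases hAB with hA | hB
  · exact hdom _ _ (hκ i (by omega)) (hκ _ h) hA.1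
  · have ⟨hlow, hhigh⟩ := hB.lowSum_le_and_le_highSum hC hτt hκ h
    rcases hout with hout | hout
    · exact absurd hlow hout.not_ge
    · exact absurd hhigh hout.not_ge

theorem lowSum_le_of_condA_or_condB
    (hcond : ∀ i, i + 1 < n → SCondA τ τt n κ i ∨ SCondB τ τt n κ i) :
    ∀ i < n, τt (lowSum κ i) ≤ τt (∑ j ∈ range n, κ j) := by
  intro i hi
  obtain ⟨N, rfl⟩ : ∃ N, n = N + 1 := ⟨n - 1, by omega⟩
  refine hτt.sum_range_le_sum_range hC (fun j hj => hκ j (by omega)) ?_ i (by omega)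
  exact fun k hk hlt => le_succ_of_condA_or_condB hC hτt hdom hκ (by omega) (hcond k (by omega))
    (Or.inl hlt)

theorem le_sum_Ico_of_condA_or_condB
    (hcond : ∀ i, i + 1 < n → SCondA τ τt n κ i ∨ SCondB τ τt n κ i) :
    ∀ i < n, τt (∑ j ∈ range n, κ j) ≤ τt (∑ j ∈ Ico i n, κ j) := by
  intro i hi
  obtain ⟨N, rfl⟩ : ∃ N, n = N + 1 := ⟨n - 1, by omega⟩
  have htotal : ∑ j ∈ range (N + 1), κ (N - j) = ∑ j ∈ range (N + 1), κ j := by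
    rw [sum_range_reflect_eq_sum_Ico κ le_rfl, Nat.sub_self, range_eq_Ico]
  -- read the sequence backwards, with the order on `T'` reversed
  have key := hτt.dual_s9.sum_range_le_sum_range hC (x := fun j => κ (N - j)) (N := N)
    (fun j _ => hκ _ (by omega)) ?_ (N - i) (by omega)
  · rwa [htotal, sum_range_reflect_eq_sum_Ico κ (k := N - i) (by omega),
      Nat.sub_sub_self (by omega)] at key
  · intro k hk hlt
    have hsucc : N - (k + 1) + 1 = N - k := by omega
    have hle := le_succ_of_condA_or_condB hC hτt hdom hκ (i := N - (k + 1)) (by omega)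
      (hcond _ (by omega)) (Or.inr (by
        rw [htotal, sum_range_reflect_eq_sum_Ico κ hk.le] at hlt
        rwa [highSum, hsucc]))
    rwa [hsucc] at hle

theorem condB_of_condA_or_condB
    (hcond : ∀ i, i + 1 < n → SCondA τ τt n κ i ∨ SCondB τ τt n κ i) :
    ∀ i, i + 1 < n → SCondB τ τt n κ i := by
  intro i h
  refine (hcond i h).resolve_left fun hA => hA.2.not_ge ?_
  calc τt (lowSum κ i) ≤ τt (∑ j ∈ range n, κ j) :=
        lowSum_le_of_condA_or_condB hC hτt hdom hκ hcond i (by omega)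
    _ ≤ τt (highSum κ i n) := le_sum_Ico_of_condA_or_condB hC hτt hdom hκ hcond (i + 1) h

theorem eq_sum_of_forall_condB (hB : ∀ i, i + 1 < n → SCondB τ τt n κ i) :
    ∀ i < n, τt (κ i) = τt (∑ j ∈ range n, κ j) := by
  have hcond i h : SCondA τ τt n κ i ∨ SCondB τ τt n κ i := Or.inr (hB i h)
  have hanti : ∀ i j, i ≤ j → j < n → τt (κ j) ≤ τt (κ i) := by
    intro i j hij
    induction j, hij using Nat.le_induction with
    | base => exact fun _ => le_rfl
    | succ j _ ih =>
      exact fun hj => (hdom _ _ (hκ _ hj) (hκ j (by omega)) (hB j hj).1.le).trans (ih (by omega))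
  intro i hi
  apply le_antisymm
  · calc τt (κ i) ≤ τt (κ 0) := hanti 0 i (Nat.zero_le i) hi
      _ = τt (lowSum κ 0) := by simp [lowSum]
      _ ≤ _ := lowSum_le_of_condA_or_condB hC hτt hdom hκ hcond 0 (by omega)
  · calc τt (∑ j ∈ range n, κ j) ≤ τt (∑ j ∈ Ico (n - 1) n, κ j) :=
          le_sum_Ico_of_condA_or_condB hC hτt hdom hκ hcond (n - 1) (by omega)
      _ = τt (κ (n - 1)) := by rw [Nat.Ico_pred_singleton (by omega), sum_singleton]
      _ ≤ τt (κ i) := hanti i (n - 1) (by omega) (by omega)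

end Dominance

theorem condB_of_reversing_of_eq_sum (hC : ∀ a b : A, a ∈ C → b ∈ C → a + b ∈ C)
    (hτt : WeakStability C τt) (hκ : ∀ i, i < n → κ i ∈ C) (hrev : Reversing τ n κ)
    (heq : ∀ i, i < n → τt (κ i) = τt (∑ j ∈ range n, κ j)) :
    ∀ i, i + 1 < n → SCondB τ τt n κ i := by
  intro i h
  refine ⟨hrev i h, le_of_eq ?_⟩
  rw [lowSum, highSum,
    hτt.sum_eq_of_forall_eq hC nonempty_range_add_one fun j hj =>
      have hj : j < n := by rw [mem_range] at hj; omega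
      ⟨hκ j hj, heq j hj⟩,
    hτt.sum_eq_of_forall_eq hC (nonempty_Ico.mpr h) fun j hj =>
      ⟨hκ j (mem_Ico.mp hj).2, heq j (mem_Ico.mp hj).2⟩]

theorem Scoeff_eq_one_of_forall_condB (hB : ∀ i, i + 1 < n → SCondB τ τt n κ i) :
    Scoeff τ τt n κ = 1 := by
  have hB' : ∀ i ∈ range (n - 1), SCondB τ τt n κ i := fun i hi => hB i (by simp at hi; omega)
  rw [Scoeff, if_pos fun i hi => Or.inr (hB' i hi),
    filter_false_of_mem fun i hi hA => hA.2.not_ge (hB' i hi).2, card_empty, pow_zero]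

end

theorem stmt9_general {A T T' : Type*} [AddCommGroup A] [LinearOrder T] [LinearOrder T']
    (C : Set A) (hC : ∀ a b : A, a ∈ C → b ∈ C → a + b ∈ C)
    (τ : A → T) (τt : A → T') (hτt : WeakStability C τt)
    (hdom : ∀ α β : A, α ∈ C → β ∈ C → τ α ≤ τ β → τt α ≤ τt β)
    (n : ℕ) (κ : ℕ → A) (hκ : ∀ i, i < n → κ i ∈ C) :
    Scoeff τ τt n κ =
      if (∀ i, i + 1 < n → τ (κ (i + 1)) < τ (κ i)) ∧
         (∀ i, i < n → τt (κ i) = τt (∑ j ∈ Finset.range n, κ j)) then 1 else 0 := by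
  by_cases hcond : ∀ i ∈ range (n - 1), SCondA τ τt n κ i ∨ SCondB τ τt n κ i
  · have hB := condB_of_condA_or_condB hC hτt hdom hκ fun i h => hcond i (by simp; omega)
    rw [Scoeff_eq_one_of_forall_condB hB,
      if_pos ⟨fun i h => (hB i h).1, eq_sum_of_forall_condB hC hτt hdom hκ hB⟩]
  · rw [Scoeff, if_neg hcond, if_neg]
    rintro ⟨hrev, heq⟩
    exact hcond fun i hi =>
      Or.inr (condB_of_reversing_of_eq_sum hC hτt hκ hrev heq i (by simp at hi; omega))

theorem stmt9 {A T T' : Type*} [AddCommGroup A] [LinearOrder T] [LinearOrder T']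
    (C : Set A) (hC : ∀ a b : A, a ∈ C → b ∈ C → a + b ∈ C) (h0 : (0 : A) ∉ C)
    (τ : A → T) (τt : A → T') (hτ : WeakStability C τ) (hτt : WeakStability C τt)
    (hdom : ∀ α β : A, α ∈ C → β ∈ C → τ α ≤ τ β → τt α ≤ τt β)
    (n : ℕ) (hn : 1 ≤ n) (κ : ℕ → A) (hκ : ∀ i, i < n → κ i ∈ C) :
    Scoeff τ τt n κ =
      if (∀ i, i + 1 < n → τ (κ (i + 1)) < τ (κ i)) ∧
         (∀ i, i < n → τt (κ i) = τt (∑ j ∈ Finset.range n, κ j)) then 1 else 0 :=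
  stmt9_general C hC τ τt hτt hdom n κ hκ
end
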